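/- Let A, P, Q, R be four points in three-dimensional Euclidean space (the vertices of a tetrahedron). Write d = dist(P,Q), e = dist(A,R) for the lengths of a pair of non-incident (opposite) edges, and a = dist(A,P), b = dist(A,Q), c = dist(Q,R), f = dist(P,R) for the lengths of the remaining four edges. Let M₁, M₂, M₃, M₄ be the midpoints of the segments AP, AQ, QR, PR respectively (the vertices of the medial parallelogram determined by the edge pair PQ, AR). Then the area of that parallelogram, namely the norm of the cross product of its side vectors, satisfies ‖(M₂ − M₁) ×₃ (M₃ − M₂)‖ = (1/8) · √(4·d²·e² − (b² + f² − a² − c²)²). -/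
import Mathlib

open Matrix

/-- The cross product on three-dimensional Euclidean space. -/
noncomputable def cross3 (u v : EuclideanSpace ℝ (Fin 3)) : EuclideanSpace ℝ (Fin 3) :=
  (EuclideanSpace.equiv (Fin 3) ℝ).symm
    (crossProduct (EuclideanSpace.equiv (Fin 3) ℝ u) (EuclideanSpace.equiv (Fin 3) ℝ v))

lemma dist_sq_eq (x y : EuclideanSpace ℝ (Fin 3)) :
    dist x y ^ 2 = (x 0 - y 0)^2 + (x 1 - y 1)^2 + (x 2 - y 2)^2 := by
  rw [EuclideanSpace.dist_eq, Real.sq_sqrt (by positivity), Fin.sum_univ_three]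
  simp [Real.dist_eq, sq_abs]

lemma norm_sq_eq (x : EuclideanSpace ℝ (Fin 3)) :
    ‖x‖ ^ 2 = (x 0)^2 + (x 1)^2 + (x 2)^2 := by
  rw [EuclideanSpace.norm_eq, Real.sq_sqrt (by positivity), Fin.sum_univ_three]
  simp [Real.norm_eq_abs, sq_abs]

lemma cross3_apply (u v : EuclideanSpace ℝ (Fin 3)) :
    cross3 u v 0 = u 1 * v 2 - u 2 * v 1 ∧
    cross3 u v 1 = u 2 * v 0 - u 0 * v 2 ∧
    cross3 u v 2 = u 0 * v 1 - u 1 * v 0 := by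
  refine ⟨?_, ?_, ?_⟩ <;>
    simp [cross3, EuclideanSpace.equiv, cross_apply]

lemma sub_apply3 (x y : EuclideanSpace ℝ (Fin 3)) (i : Fin 3) :
    (x - y) i = x i - y i := rfl

lemma midpoint_apply3 (x y : EuclideanSpace ℝ (Fin 3)) (i : Fin 3) :
    (midpoint ℝ x y) i = (x i + y i) / 2 := by
  rw [midpoint_eq_smul_add]
  change (2 : ℝ)⁻¹ * (x i + y i) = _
  ring

theorem medial_parallelogram_area
    (A P Q R : EuclideanSpace ℝ (Fin 3))
    (d e a b c f : ℝ)
    (hd : d = dist P Q) (he : e = dist A R)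
    (ha : a = dist A P) (hb : b = dist A Q)
    (hc : c = dist Q R) (hf : f = dist P R)
    (M₁ M₂ M₃ M₄ : EuclideanSpace ℝ (Fin 3))
    (hM₁ : M₁ = midpoint ℝ A P) (hM₂ : M₂ = midpoint ℝ A Q)
    (hM₃ : M₃ = midpoint ℝ Q R) (hM₄ : M₄ = midpoint ℝ P R) :
    ‖cross3 (M₂ - M₁) (M₃ - M₂)‖ =
      (1 / 8) * Real.sqrt (4 * d ^ 2 * e ^ 2 - (b ^ 2 + f ^ 2 - a ^ 2 - c ^ 2) ^ 2) := by
  subst hd he ha hb hc hf hM₁ hM₂ hM₃ hM₄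
  have key : 4 * dist P Q ^ 2 * dist A R ^ 2 -
      (dist A Q ^ 2 + dist P R ^ 2 - dist A P ^ 2 - dist Q R ^ 2) ^ 2 =
      (8 * ‖cross3 (midpoint ℝ A Q - midpoint ℝ A P) (midpoint ℝ Q R - midpoint ℝ A Q)‖) ^ 2 := by
    rw [mul_pow, norm_sq_eq,
      (cross3_apply _ _).1, (cross3_apply _ _).2.1, (cross3_apply _ _).2.2]
    simp only [sub_apply3, midpoint_apply3, dist_sq_eq]
    ring
  rw [key, Real.sqrt_sq (by positivity)]
  ring
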